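/- Let F be a field, let α ∈ F be an element of multiplicative order n, let r be a natural number with 1 ≤ r < n, and let g = ∏_{i=1}^{r} (X − α^i). Let ι : F → (Fin M → Bool) be an inner encoding such that for all distinct a, b ∈ F the Hamming distance between ι(a) and ι(b) is at least e. Then for any two distinct polynomials q₁, q₂ over F, each of degree strictly less than n − r, the concatenated binary strings Fin n × Fin M → Bool given by (i, j) ↦ ι((q₁·g).coeff i) j and (i, j) ↦ ι((q₂·g).coeff i) j have Hamming distance at least (r + 1)·e. -/

import Mathlib

/-!
The difference of two codewords is `f = (q₁ - q₂) * g`, a nonzero polynomial of degree `< n`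
vanishing at `α, α², …, α^r`. If it had `s ≤ r` nonzero coefficients, the equations
`f(α^m) = 0` for `m = 1, …, s` would form a square Vandermonde system in the nodes `α^k`
(`k` running over the support, so the nodes are distinct as `k < n = orderOf α`), forcing
`f = 0`. Hence the outer codewords differ in at least `r + 1` positions, and at each of them
the inner encodings differ in at least `e` bits.
-/

open Polynomial Finset Matrix

theorem hammingDist_uncurry {ι κ : Type*} {β : κ → Type*} [Fintype ι] [Fintype κ]
    [∀ k, DecidableEq (β k)] (x y : ι → ∀ k, β k) :
    hammingDist (fun p : ι × κ => x p.1 p.2) (fun p : ι × κ => y p.1 p.2)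
      = ∑ i, hammingDist (x i) (y i) := by
  simp only [hammingDist, card_filter, Fintype.sum_prod_type]

theorem mul_hammingDist_le_hammingDist_concat {ι κ α β : Type*} [Fintype ι] [Fintype κ]
    [DecidableEq α] [DecidableEq β] {enc : α → κ → β} {e : ℕ}
    (henc : ∀ a b, a ≠ b → e ≤ hammingDist (enc a) (enc b)) (u v : ι → α) :
    hammingDist u v * e
      ≤ hammingDist (fun p : ι × κ => enc (u p.1) p.2) (fun p : ι × κ => enc (v p.1) p.2) := by
  rw [hammingDist_uncurry (fun i => enc (u i)) (fun i => enc (v i))]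
  calc hammingDist u v * e = ∑ _i with u _i ≠ v _i, e := by
        rw [sum_const, smul_eq_mul]; rfl
    _ ≤ ∑ i with u i ≠ v i, hammingDist (enc (u i)) (enc (v i)) :=
        sum_le_sum fun i hi => henc _ _ (mem_filter.mp hi).2
    _ ≤ ∑ i, hammingDist (enc (u i)) (enc (v i)) := sum_le_sum_of_subset (filter_subset _ _)

namespace Polynomial

theorem hammingDist_coeff_eq_card_support {R : Type*} [Ring R] [DecidableEq R] {p q : R[X]}
    {n : ℕ} (h : (p - q).natDegree < n) :
    hammingDist (fun i : Fin n => p.coeff i) (fun i : Fin n => q.coeff i) = #(p - q).support := by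
  have hsupp : ∀ m ∈ (p - q).support, m < n := fun m hm =>
    (le_natDegree_of_mem_supp m hm).trans_lt h
  rw [← card_attachFin _ hsupp, hammingDist]
  congr 1
  ext i
  simp [mem_attachFin, sub_eq_zero]

theorem natDegree_finset_prod_X_sub_C {R ι : Type*} [CommRing R] [Nontrivial R]
    (s : Finset ι) (b : ι → R) : (∏ i ∈ s, (X - C (b i))).natDegree = #s := by
  simp [natDegree_prod_of_monic _ _ fun i _ => monic_X_sub_C (b i)]

theorem eval_finset_prod_X_sub_C_of_mem {R ι : Type*} [CommRing R] {s : Finset ι} {i : ι}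
    (b : ι → R) (hi : i ∈ s) : (∏ j ∈ s, (X - C (b j))).eval (b i) = 0 := by
  rw [eval_prod]
  exact prod_eq_zero hi (by simp)

theorem lt_card_support_of_eval_pow_eq_zero {F : Type*} [Field F] {α : F} {r : ℕ} {f : F[X]}
    (hf : f ≠ 0) (hdeg : f.natDegree < orderOf α)
    (hroots : ∀ i ∈ Icc 1 r, f.eval (α ^ i) = 0) : r < #f.support := by
  by_contra! hs
  set s := #f.support
  let σ : Fin s → ℕ := fun k => f.support.equivFin.symm k
  have hσ : ∀ k, σ k ∈ f.support := fun k => (f.support.equivFin.symm k).2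
  have hσlt : ∀ k, σ k < orderOf α := fun k => (le_natDegree_of_mem_supp _ (hσ k)).trans_lt hdeg
  have hα : α ≠ 0 := (orderOf_pos_iff.mp ((Nat.zero_le _).trans_lt hdeg)).isUnit.ne_zero
  have hnodes : Function.Injective fun k => α ^ σ k := fun k l h =>
    f.support.equivFin.symm.injective (Subtype.ext (pow_injOn_Iio_orderOf (hσlt k) (hσlt l) h))
  have heval : ∀ x, f.eval x = ∑ k, f.coeff (σ k) * x ^ σ k := fun x => by
    rw [eval_eq_sum, sum_def, ← sum_coe_sort]
    exact (f.support.equivFin.symm.sum_comp fun k : f.support => f.coeff k * x ^ (k : ℕ)).symm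
  -- `f(α^(m+1)) = ∑ₖ (f_k α^k) (α^k)^m`: a Vandermonde system in the weighted coefficients.
  have hsystem : (fun k => f.coeff (σ k) * α ^ σ k) ᵥ* vandermonde (fun k => α ^ σ k) = 0 := by
    funext m
    rw [Pi.zero_apply, ← hroots (m + 1) (mem_Icc.mpr ⟨by omega, by omega⟩), heval]
    simp only [vecMul, dotProduct, vandermonde_apply]
    exact sum_congr rfl fun k _ => by ring
  have hpos : 0 < s := card_pos.mpr (support_nonempty.mpr hf)
  have hzero := congrFun (eq_zero_of_vecMul_eq_zero (det_vandermonde_ne_zero_iff.mpr hnodes)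
    hsystem) ⟨0, hpos⟩
  exact mem_support_iff.mp (hσ ⟨0, hpos⟩) ((mul_eq_zero.mp hzero).resolve_right (pow_ne_zero _ hα))

end Polynomial

theorem reed_solomon_concatenation_distance_general {F : Type*} [Field F]
    (α : F) (n r M e : ℕ)
    (hn : orderOf α = n)
    (g : Polynomial F)
    (hg : g = ∏ i ∈ Finset.Icc 1 r, (Polynomial.X - Polynomial.C (α ^ i)))
    (ι : F → Fin M → Bool)
    (hι : ∀ a b : F, a ≠ b → e ≤ hammingDist (ι a) (ι b))
    (q₁ q₂ : Polynomial F) (hq : q₁ ≠ q₂)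
    (h₁ : q₁.degree < ((n - r : ℕ) : ℕ)) (h₂ : q₂.degree < ((n - r : ℕ) : ℕ)) :
    (r + 1) * e ≤ hammingDist
      (fun p : Fin n × Fin M => ι ((q₁ * g).coeff p.1) p.2)
      (fun p : Fin n × Fin M => ι ((q₂ * g).coeff p.1) p.2) := by
  classical
  have hq' : q₁ - q₂ ≠ 0 := sub_ne_zero.mpr hq
  have hg0 : g ≠ 0 := hg ▸ (monic_prod_X_sub_C _ _).ne_zero
  have hf : (q₁ - q₂) * g ≠ 0 := mul_ne_zero hq' hg0
  have hdeg : ((q₁ - q₂) * g).natDegree < n := by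
    have : (q₁ - q₂).natDegree < n - r :=
      (natDegree_lt_iff_degree_lt hq').mpr ((degree_sub_le _ _).trans_lt (max_lt h₁ h₂))
    rw [natDegree_mul hq' hg0, hg, natDegree_finset_prod_X_sub_C, Nat.card_Icc]
    omega
  have hroots : ∀ i ∈ Icc 1 r, ((q₁ - q₂) * g).eval (α ^ i) = 0 := fun i hi => by
    rw [eval_mul, hg, eval_finset_prod_X_sub_C_of_mem (α ^ ·) hi, mul_zero]
  have hweight := lt_card_support_of_eval_pow_eq_zero hf (hn ▸ hdeg) hroots
  rw [sub_mul] at hdeg hweight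
  calc (r + 1) * e
      ≤ hammingDist (fun i : Fin n => (q₁ * g).coeff i) (fun i => (q₂ * g).coeff i) * e := by
        rw [hammingDist_coeff_eq_card_support hdeg]
        exact Nat.mul_le_mul_right e hweight
    _ ≤ _ := mul_hammingDist_le_hammingDist_concat hι _ _

/-- Distance of the concatenation of a Reed–Solomon outer code (multiples of
`g = ∏_{i=1}^r (X - α^i)`) with an inner binary code `ι` of distance `e`:
distinct messages `q₁ ≠ q₂` of degree `< n - r` yield concatenated binary
strings at Hamming distance at least `(r + 1) * e`. -/
theorem reed_solomon_concatenation_distance {F : Type*} [Field F] [DecidableEq F]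
    (α : F) (n r M e : ℕ)
    (hn : orderOf α = n) (hr1 : 1 ≤ r) (hrn : r < n)
    (g : Polynomial F)
    (hg : g = ∏ i ∈ Finset.Icc 1 r, (Polynomial.X - Polynomial.C (α ^ i)))
    (ι : F → Fin M → Bool)
    (hι : ∀ a b : F, a ≠ b → e ≤ hammingDist (ι a) (ι b))
    (q₁ q₂ : Polynomial F) (hq : q₁ ≠ q₂)
    (h₁ : q₁.degree < ((n - r : ℕ) : ℕ)) (h₂ : q₂.degree < ((n - r : ℕ) : ℕ)) :
    (r + 1) * e ≤ hammingDist
      (fun p : Fin n × Fin M => ι ((q₁ * g).coeff p.1) p.2)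
      (fun p : Fin n × Fin M => ι ((q₂ * g).coeff p.1) p.2) :=
  reed_solomon_concatenation_distance_general α n r M e hn g hg ι hι q₁ q₂ hq h₁ h₂
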